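/- arXiv:1503.08085 — 4 statements merged into one kernel-verified Lean document; each statement's English description precedes it below -/
import Mathlib

section
/- Suppose 0 < C < K and F(1) < (1 − C/K) * exp(λ). Then there exists exactly one p ∈ [0,1] with F(p) = G(p), and this p lies in the open interval (0,1). (This p is the unique symmetric mixed Nash equilibrium of the protection game.) -/
/-!
With `w t = λ r t`, `F(p) e^{-λp}` is the probability that independent Poisson counts with means
`w t p` land in `S`, and `S` is a finite down-set of `ℕ^T`. Differentiating term by term and
shifting `x ↦ x - e_t` turns `F'(p)` into `∑ t, w t F_t(p)`, where `F_t` sums only over those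
`x ∈ S` with `x + e_t ∈ S`. An element of `S` maximal in direction `t` is missing from `F_t`, so
`F' < λ F` for `p > 0` and `F(p) e^{-λp}` is strictly decreasing. It falls from `1` at `p = 0` to
below `1 - C/K` at `p = 1`, so it takes the value `1 - C/K` exactly once, in the interior.
-/

open Finset Real

lemma Finset.exists_add_single_notMem {α : Type*} [DecidableEq α] {S : Finset (α → ℕ)}
    (hS : S.Nonempty) (a : α) : ∃ y ∈ S, y + Pi.single a 1 ∉ S := by
  obtain ⟨y, hy, hmax⟩ := S.exists_max_image (· a) hS
  exact ⟨y, hy, fun h => by simpa using hmax _ h⟩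

lemma isLowerSet_setOf_sum_mul_lt {ι : Type*} [Fintype ι] {a : ι → ℝ}
    (ha : ∀ i, 0 ≤ a i) (c : ℝ) : IsLowerSet {x : ι → ℕ | ∑ i, (x i : ℝ) * a i < c} := by
  intro x y hyx (hx : ∑ i, (x i : ℝ) * a i < c)
  refine lt_of_le_of_lt (sum_le_sum fun i _ => ?_) hx
  exact mul_le_mul_of_nonneg_right (by exact_mod_cast hyx i) (ha i)

theorem StrictAntiOn.existsUnique_eq_and_mem_Ioo {f : ℝ → ℝ} {a b v : ℝ} (hab : a ≤ b)
    (hf : ContinuousOn f (Set.Icc a b)) (hanti : StrictAntiOn f (Set.Icc a b))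
    (hv : v ∈ Set.Ioo (f b) (f a)) :
    (∃! p, p ∈ Set.Icc a b ∧ f p = v) ∧ ∀ p ∈ Set.Icc a b, f p = v → p ∈ Set.Ioo a b := by
  have hinterior : ∀ p ∈ Set.Icc a b, f p = v → p ∈ Set.Ioo a b := by
    rintro p ⟨hap, hpb⟩ rfl
    exact ⟨hap.lt_of_ne (by rintro rfl; exact hv.2.false),
      hpb.lt_of_ne (by rintro rfl; exact hv.1.false)⟩
  obtain ⟨p, hp, hfp⟩ := intermediate_value_Ioo' hab hf hv
  refine ⟨⟨p, ⟨Set.Ioo_subset_Icc_self hp, hfp⟩, fun q hq => ?_⟩, hinterior⟩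
  exact hanti.injOn hq.1 (Set.Ioo_subset_Icc_self hp) (hq.2.trans hfp.symm)

section TruncExp

variable {ι : Type*} [Fintype ι]

noncomputable def expMonomial (x : ι → ℕ) (y : ι → ℝ) : ℝ :=
  ∏ i, y i ^ x i / (x i).factorial

noncomputable def truncExp (S : Finset (ι → ℕ)) (y : ι → ℝ) : ℝ :=
  ∑ x ∈ S, expMonomial x y

lemma expMonomial_pos (x : ι → ℕ) {y : ι → ℝ} (hy : ∀ i, 0 < y i) : 0 < expMonomial x y :=
  prod_pos fun i _ => by have := hy i; positivity

lemma expMonomial_mul_right (x : ι → ℕ) (w : ι → ℝ) (p : ℝ) :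
    expMonomial x (fun i => w i * p) = expMonomial x w * p ^ ∑ i, x i := by
  simp only [expMonomial, mul_pow, ← prod_pow_eq_pow_sum, ← prod_mul_distrib]
  exact prod_congr rfl fun i _ => by ring

lemma truncExp_zero {S : Finset (ι → ℕ)} (h0 : 0 ∈ S) : truncExp S 0 = 1 := by
  rw [truncExp, sum_eq_single_of_mem 0 h0]
  · simp [expMonomial]
  · intro x _ hx
    obtain ⟨i, hi⟩ := Function.ne_iff.mp hx
    exact prod_eq_zero (mem_univ i) (by simp_all)

lemma continuous_truncExp_mul_right (S : Finset (ι → ℕ)) (w : ι → ℝ) :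
    Continuous fun p => truncExp S (fun i => w i * p) := by
  unfold truncExp expMonomial
  fun_prop

lemma hasDerivAt_truncExp_mul_right (S : Finset (ι → ℕ)) (w : ι → ℝ) (p : ℝ) :
    HasDerivAt (fun q => truncExp S (fun i => w i * q))
      (∑ x ∈ S, expMonomial x w * ((∑ i, x i : ℕ) * p ^ (∑ i, x i - 1))) p := by
  simp only [truncExp, expMonomial_mul_right]
  exact HasDerivAt.fun_sum fun x _ => (hasDerivAt_pow _ p).const_mul _

variable [DecidableEq ι]

lemma expMonomial_add_single (x : ι → ℕ) (w : ι → ℝ) (i : ι) :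
    expMonomial (x + Pi.single i 1) w * (x i + 1) = w i * expMonomial x w := by
  have hrest : ∀ j ∈ ({i}ᶜ : Finset ι), (x + Pi.single i 1 : ι → ℕ) j = x j := fun j hj => by
    simp [Pi.single_eq_of_ne (by simpa using hj : j ≠ i)]
  rw [expMonomial, expMonomial, Fintype.prod_eq_mul_prod_compl i,
    Fintype.prod_eq_mul_prod_compl i, prod_congr rfl fun j hj => by rw [hrest j hj]]
  simp only [Pi.add_apply, Pi.single_eq_same, Nat.factorial_succ]
  push_cast
  field_simp
  ring

lemma sum_add_single_one (x : ι → ℕ) (i : ι) :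
    ∑ j, (x + Pi.single i 1 : ι → ℕ) j = ∑ j, x j + 1 := by
  simp [sum_add_distrib]

lemma sum_expMonomial_mul_apply {S : Finset (ι → ℕ)} (hS : IsLowerSet (S : Set (ι → ℕ)))
    (w : ι → ℝ) (p : ℝ) (i : ι) :
    ∑ x ∈ S, expMonomial x w * (x i * p ^ (∑ j, x j - 1)) =
      w i * truncExp {y ∈ S | y + Pi.single i 1 ∈ S} (fun j => w j * p) := by
  have hvanish : ∀ x ∈ S, expMonomial x w * (x i * p ^ (∑ j, x j - 1)) ≠ 0 → 1 ≤ x i :=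
    fun x _ hx => Nat.one_le_iff_ne_zero.mpr fun h => hx (by simp [h])
  have hle : ∀ x : ι → ℕ, 1 ≤ x i → Pi.single i 1 ≤ x := fun x hx j => by
    rcases eq_or_ne j i with rfl | hj <;> simp_all
  rw [← sum_filter_of_ne hvanish, truncExp, mul_sum]
  refine sum_nbij' (· - Pi.single i 1) (· + Pi.single i 1) ?_ ?_ ?_ ?_ ?_
  · intro x hx
    simp only [mem_filter] at hx ⊢
    exact ⟨hS tsub_le_self hx.1, by rw [tsub_add_cancel_of_le (hle x hx.2)]; exact hx.1⟩
  · intro y hy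
    simp only [mem_filter] at hy ⊢
    exact ⟨hy.2, by simp⟩
  · intro x hx
    simp only [mem_filter] at hx
    exact tsub_add_cancel_of_le (hle x hx.2)
  · intro y _
    exact add_tsub_cancel_right y _
  · intro x hx
    simp only [mem_filter] at hx
    obtain ⟨y, rfl⟩ : ∃ y : ι → ℕ, x = y + Pi.single i 1 :=
      ⟨_, (tsub_add_cancel_of_le (hle x hx.2)).symm⟩
    rw [add_tsub_cancel_right, sum_add_single_one, Nat.add_sub_cancel, expMonomial_mul_right,
      ← mul_assoc (w i), ← expMonomial_add_single]
    simp only [Pi.add_apply, Pi.single_eq_same, Nat.cast_add, Nat.cast_one]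
    ring

lemma hasDerivAt_truncExp_mul_right_of_isLowerSet {S : Finset (ι → ℕ)}
    (hS : IsLowerSet (S : Set (ι → ℕ))) (w : ι → ℝ) (p : ℝ) :
    HasDerivAt (fun q => truncExp S (fun i => w i * q))
      (∑ i, w i * truncExp {y ∈ S | y + Pi.single i 1 ∈ S} (fun j => w j * p)) p := by
  convert hasDerivAt_truncExp_mul_right S w p using 1
  simp only [← sum_expMonomial_mul_apply hS, Nat.cast_sum, sum_mul, mul_sum]
  exact sum_comm

lemma sum_mul_truncExp_filter_lt [Nonempty ι] {S : Finset (ι → ℕ)} (hS : S.Nonempty)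
    {w y : ι → ℝ} (hw : ∀ i, 0 < w i) (hy : ∀ i, 0 < y i) :
    ∑ i, w i * truncExp {x ∈ S | x + Pi.single i 1 ∈ S} y < (∑ i, w i) * truncExp S y := by
  rw [sum_mul]
  refine sum_lt_sum_of_nonempty univ_nonempty fun i _ => mul_lt_mul_of_pos_left ?_ (hw i)
  obtain ⟨x, hxS, hx⟩ := S.exists_add_single_notMem hS i
  exact sum_lt_sum_of_subset (filter_subset _ _) hxS (by simp [hx]) (expMonomial_pos x hy)
    fun x _ _ => (expMonomial_pos x hy).le

theorem strictAntiOn_truncExp_mul_exp [Nonempty ι] {S : Finset (ι → ℕ)}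
    (hS : IsLowerSet (S : Set (ι → ℕ))) (hne : S.Nonempty) {w : ι → ℝ} (hw : ∀ i, 0 < w i) :
    StrictAntiOn (fun p => truncExp S (fun i => w i * p) * exp (-((∑ i, w i) * p)))
      (Set.Ici 0) := by
  refine strictAntiOn_of_deriv_neg (convex_Ici 0)
    ((continuous_truncExp_mul_right S w).mul (by fun_prop)).continuousOn fun p hp => ?_
  rw [interior_Ici] at hp
  have hE : HasDerivAt (fun q => exp (-((∑ i, w i) * q)))
      (exp (-((∑ i, w i) * p)) * -∑ i, w i) p := by
    simpa using ((hasDerivAt_id p).const_mul (∑ i, w i)).fun_neg.exp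
  rw [((hasDerivAt_truncExp_mul_right_of_isLowerSet hS w p).fun_mul hE).deriv]
  have hlt := sum_mul_truncExp_filter_lt hne hw fun i => mul_pos (hw i) hp
  have := exp_pos (-((∑ i, w i) * p))
  nlinarith

theorem existsUnique_truncExp_mul_right_eq_mul_exp [Nonempty ι] {S : Finset (ι → ℕ)}
    (hS : IsLowerSet (S : Set (ι → ℕ))) (h0 : 0 ∈ S) {w : ι → ℝ} (hw : ∀ i, 0 < w i) {v : ℝ}
    (hv : v < 1) (hvw : truncExp S w < v * exp (∑ i, w i)) :
    (∃! p, p ∈ Set.Icc (0 : ℝ) 1 ∧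
        truncExp S (fun i => w i * p) = v * exp ((∑ i, w i) * p)) ∧
      ∀ p ∈ Set.Icc (0 : ℝ) 1, truncExp S (fun i => w i * p) = v * exp ((∑ i, w i) * p) →
        p ∈ Set.Ioo (0 : ℝ) 1 := by
  set φ : ℝ → ℝ := fun p => truncExp S (fun i => w i * p) * exp (-((∑ i, w i) * p))
  have hiff : ∀ p, truncExp S (fun i => w i * p) = v * exp ((∑ i, w i) * p) ↔ φ p = v :=
    fun p => by
      simp only [φ, exp_neg, ← div_eq_mul_inv]
      rw [div_eq_iff (exp_pos _).ne']
  have hφ0 : φ 0 = 1 := by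
    simp only [φ, mul_zero, neg_zero, exp_zero, mul_one]
    exact truncExp_zero h0
  have hφ1 : φ 1 < v := by
    simp only [φ, mul_one, exp_neg, ← div_eq_mul_inv]
    rwa [div_lt_iff₀ (exp_pos _)]
  simp_rw [hiff]
  have hanti : StrictAntiOn φ (Set.Icc 0 1) :=
    (strictAntiOn_truncExp_mul_exp hS ⟨0, h0⟩ hw).mono Set.Icc_subset_Ici_self
  have hcont : Continuous φ := (continuous_truncExp_mul_right S w).mul (by fun_prop)
  exact hanti.existsUnique_eq_and_mem_Ioo zero_le_one hcont.continuousOn ⟨hφ1, hφ0 ▸ hv⟩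

end TruncExp

theorem mixed_equilibrium_exists_unique_general (T : ℕ) (hT : 1 ≤ T)
    (lam : ℝ) (hlam : 0 < lam)
    (r : Fin T → ℝ) (hr : ∀ t, 0 < r t) (hrsum : ∑ t, r t = 1)
    (τ : Fin T → ℝ) (hτ : ∀ t, 0 < τ t)
    (K C : ℝ) (hK : 0 < K) (hC : 0 < C)
    (S : Set (Fin T → ℕ))
    (hSdef : S = {x : Fin T → ℕ | ∑ t, (x t : ℝ) * τ t / (1 + τ t) < 1})
    (hSfin : S.Finite)
    (F : ℝ → ℝ)
    (hF : ∀ p : ℝ, F p =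
      ∑ x ∈ hSfin.toFinset, ∏ t, (lam * r t * p) ^ (x t) / (Nat.factorial (x t) : ℝ))
    (G : ℝ → ℝ)
    (hG : ∀ p : ℝ, G p = (1 - C / K) * Real.exp (lam * p))
    (hcond : F 1 < (1 - C / K) * Real.exp lam) :
    (∃! p : ℝ, p ∈ Set.Icc (0 : ℝ) 1 ∧ F p = G p) ∧
    (∀ p ∈ Set.Icc (0 : ℝ) 1, F p = G p → p ∈ Set.Ioo (0 : ℝ) 1) := by
  have : Nonempty (Fin T) := ⟨⟨0, hT⟩⟩
  have hwsum : ∑ t, lam * r t = lam := by rw [← mul_sum, hrsum, mul_one]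
  have hlower : IsLowerSet (hSfin.toFinset : Set (Fin T → ℕ)) := by
    rw [Set.Finite.coe_toFinset, hSdef]
    simp_rw [mul_div_assoc]
    exact isLowerSet_setOf_sum_mul_lt (fun t => (div_pos (hτ t) (by linarith [hτ t])).le) 1
  have h0 : (0 : Fin T → ℕ) ∈ hSfin.toFinset := by simp [hSdef]
  obtain rfl : F = fun p => truncExp hSfin.toFinset (fun t => lam * r t * p) := funext hF
  obtain rfl : G = fun p => (1 - C / K) * exp (lam * p) := funext hG
  have h := existsUnique_truncExp_mul_right_eq_mul_exp hlower h0 (fun t => mul_pos hlam (hr t))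
    (v := 1 - C / K) (by linarith [div_pos hC hK]) (by simpa only [hwsum, mul_one] using hcond)
  rwa [hwsum] at h

/-- Existence and Uniqueness: If `0 < C < K` and
`F(1) < (1 − C/K) * exp λ`, then the equation `F(p) = G(p)` has exactly one
solution `p ∈ [0,1]`, and this solution lies in the open interval `(0,1)`.
This `p` is the unique symmetric mixed Nash equilibrium of the protection game. -/
theorem mixed_equilibrium_exists_unique (T : ℕ) (hT : 1 ≤ T)
    (lam : ℝ) (hlam : 0 < lam)
    (r : Fin T → ℝ) (hr : ∀ t, 0 < r t) (hrsum : ∑ t, r t = 1)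
    (τ : Fin T → ℝ) (hτ : ∀ t, 0 < τ t)
    (K C : ℝ) (hK : 0 < K) (hC : 0 < C) (hCK : C < K)
    (S : Set (Fin T → ℕ))
    (hSdef : S = {x : Fin T → ℕ | ∑ t, (x t : ℝ) * τ t / (1 + τ t) < 1})
    (hSfin : S.Finite)
    (F : ℝ → ℝ)
    (hF : ∀ p : ℝ, F p =
      ∑ x ∈ hSfin.toFinset, ∏ t, (lam * r t * p) ^ (x t) / (Nat.factorial (x t) : ℝ))
    (G : ℝ → ℝ)
    (hG : ∀ p : ℝ, G p = (1 - C / K) * Real.exp (lam * p))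
    (hcond : F 1 < (1 - C / K) * Real.exp lam) :
    (∃! p : ℝ, p ∈ Set.Icc (0 : ℝ) 1 ∧ F p = G p) ∧
    (∀ p ∈ Set.Icc (0 : ℝ) 1, F p = G p → p ∈ Set.Ioo (0 : ℝ) 1) :=
  mixed_equilibrium_exists_unique_general T hT lam hlam r hr hrsum τ hτ K C hK hC S hSdef hSfin F hF
    G hG hcond
end

section
/- Suppose 0 < C < K and F(1) < (1 − C/K) * exp(λ), and let p* ∈ (0,1) be the unique solution of F(p) = G(p) in (0,1). Define U(q,σ) := q * U_OFF(σ) + (1 − q) * C. Then p* is an evolutionarily stable strategy with invasion barrier 1: for every q ∈ [0,1] with q ≠ p* and every ε ∈ (0,1), setting p_ε := ε q + (1 − ε) p*, one has U(p*, p_ε) < U(q, p_ε). -/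
/-!
Since `U(q, σ) - U(p*, σ) = (q - p*) (U_OFF(σ) - C)` and `p_ε` lies strictly on the same side of
`p*` as `q`, it suffices that `U_OFF` is strictly increasing on `[0, 1]` with `U_OFF(p*) = C`.
Now `exp (-λ p) F(p)` is the probability that independent Poisson counts with means `λ r_t p` form a
vector in the finite, nonempty down-set `S`. Differentiating termwise, its derivative is
`exp (-λ p) ∑_t λ r_t (∑_{x + e_t ∈ S} m_x - ∑_{x ∈ S} m_x)` with `m_x = ∏_t (λ r_t p)^{x_t} / x_t!`,
and every bracket is negative because a maximal element of `S` contributes to the second sum but not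
to the first.
-/

open Finset Nat

lemma mixed_cost_lt_of_strictMonoOn {u : ℝ → ℝ} {c p q ε : ℝ}
    (hu : StrictMonoOn u (Set.Icc 0 1)) (hp : p ∈ Set.Icc (0 : ℝ) 1) (hpc : u p = c)
    (hq : q ∈ Set.Icc (0 : ℝ) 1) (hqp : q ≠ p) (hε₀ : 0 < ε) (hε₁ : ε ≤ 1) :
    p * u (ε * q + (1 - ε) * p) + (1 - p) * c < q * u (ε * q + (1 - ε) * p) + (1 - q) * c := by
  set m := ε * q + (1 - ε) * p
  have hm : m ∈ Set.Icc (0 : ℝ) 1 :=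
    ⟨by nlinarith [hp.1, hq.1], by nlinarith [hp.2, hq.2]⟩
  suffices 0 < (q - p) * (u m - c) by linarith
  rcases hqp.lt_or_gt with hlt | hgt
  · have hmp : m < p := by nlinarith
    exact mul_pos_of_neg_of_neg (by linarith) (by linarith [hu hm hp hmp])
  · have hpm : p < m := by nlinarith
    exact mul_pos (by linarith) (by linarith [hu hp hm hpm])

lemma isLowerSet_setOf_sum_lt {ι α : Type*} [Fintype ι] [Preorder α] {f : ι → α → ℝ}
    (hf : ∀ t, Monotone (f t)) (b : ℝ) : IsLowerSet {x : ι → α | ∑ t, f t (x t) < b} :=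
  fun _ _ hyx hx => lt_of_le_of_lt (sum_le_sum fun t _ => hf t (hyx t)) hx

lemma sub_single_add_single {ι : Type*} [DecidableEq ι] {x : ι → ℕ} {t : ι} (hx : x t ≠ 0) :
    x - Pi.single t 1 + Pi.single t 1 = x := by
  ext s
  rcases eq_or_ne s t with rfl | hs
  · simp only [Pi.add_apply, Pi.sub_apply, Pi.single_eq_same]
    omega
  · simp [hs]

lemma IsLowerSet.sum_filter_sub_single_lt {ι : Type*} [DecidableEq ι] {S : Finset (ι → ℕ)}
    (hS : IsLowerSet (S : Set (ι → ℕ))) {g : (ι → ℕ) → ℝ} (hg : ∀ y ∈ S, 0 < g y) {t : ι}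
    {y₀ : ι → ℕ} (hy₀ : y₀ ∈ S) (hy₀t : y₀ + Pi.single t 1 ∉ S) :
    ∑ x ∈ S with x t ≠ 0, g (x - Pi.single t 1) < ∑ y ∈ S, g y := by
  classical
  have hinj : Set.InjOn (· - Pi.single t 1)
      (({x ∈ S | x t ≠ 0} : Finset (ι → ℕ)) : Set (ι → ℕ)) := fun x hx x' hx' h => by
    rw [mem_coe, mem_filter] at hx hx'
    rw [← sub_single_add_single hx.2, ← sub_single_add_single hx'.2]
    exact congrArg (· + Pi.single t 1) h
  rw [← sum_image hinj]
  refine sum_lt_sum_of_subset ?_ hy₀ ?_ (hg y₀ hy₀) fun y hy _ => (hg y hy).le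
  · intro y hy
    obtain ⟨x, hx, rfl⟩ := mem_image.1 hy
    exact hS tsub_le_self (mem_filter.1 hx).1
  · intro hy
    obtain ⟨x, hx, rfl⟩ := mem_image.1 hy
    rw [sub_single_add_single (mem_filter.1 hx).2] at hy₀t
    exact hy₀t (mem_filter.1 hx).1

section PoissonMass

variable {ι : Type*} [Fintype ι]

noncomputable def poissonTerm (a : ι → ℝ) (p : ℝ) (x : ι → ℕ) : ℝ :=
  ∏ t, (a t * p) ^ x t / (x t)!

noncomputable def poissonMass (S : Finset (ι → ℕ)) (a : ι → ℝ) (p : ℝ) : ℝ :=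
  Real.exp (-(∑ t, a t) * p) * ∑ x ∈ S, poissonTerm a p x

lemma poissonTerm_pos {a : ι → ℝ} {p : ℝ} (ha : ∀ t, 0 < a t) (hp : 0 < p) (x : ι → ℕ) :
    0 < poissonTerm a p x :=
  prod_pos fun t _ => by have := ha t; positivity

lemma hasDerivAt_pow_succ_div_factorial (c : ℝ) (k : ℕ) (p : ℝ) :
    HasDerivAt (fun p => (c * p) ^ (k + 1) / (k + 1)!) (c * ((c * p) ^ k / k !)) p := by
  refine ((((hasDerivAt_id p).const_mul c).pow (k + 1)).div_const ((k + 1)! : ℝ)).congr_deriv ?_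
  rw [Nat.factorial_succ]
  push_cast
  field_simp
  simp

lemma hasDerivAt_poissonTerm [DecidableEq ι] (a : ι → ℝ) (x : ι → ℕ) (p : ℝ) :
    HasDerivAt (poissonTerm a · x)
      (∑ t with x t ≠ 0, a t * poissonTerm a p (x - Pi.single t 1)) p := by
  have hfactor : ∀ t, HasDerivAt (fun p => (a t * p) ^ x t / (x t)!)
      (if x t = 0 then 0 else a t * ((a t * p) ^ (x t - 1) / (x t - 1)!)) p := by
    intro t
    split_ifs with ht
    · simpa [ht] using hasDerivAt_const p (1 : ℝ)
    · obtain ⟨k, hk⟩ := Nat.exists_eq_add_one_of_ne_zero ht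
      simpa only [hk, Nat.add_sub_cancel] using hasDerivAt_pow_succ_div_factorial (a t) k p
  refine (HasDerivAt.fun_finsetProd fun t _ => hfactor t).congr_deriv ?_
  rw [sum_filter]
  refine sum_congr rfl fun t _ => ?_
  by_cases ht : x t = 0
  · simp [ht]
  · rw [if_neg ht, if_pos ht, smul_eq_mul, poissonTerm, ← mul_prod_erase univ _ (mem_univ t)]
    have hrest : ∏ j ∈ univ.erase t, (a j * p) ^ (x - Pi.single t 1 : ι → ℕ) j /
        ((x - Pi.single t 1 : ι → ℕ) j)! = ∏ j ∈ univ.erase t, (a j * p) ^ x j / (x j)! :=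
      prod_congr rfl fun j hj => by simp [ne_of_mem_erase hj]
    rw [hrest, Pi.sub_apply, Pi.single_eq_same]
    ring

lemma hasDerivAt_poissonMass [DecidableEq ι] (S : Finset (ι → ℕ)) (a : ι → ℝ) (p : ℝ) :
    HasDerivAt (poissonMass S a) (Real.exp (-(∑ t, a t) * p) * ∑ t, a t *
      (∑ x ∈ S with x t ≠ 0, poissonTerm a p (x - Pi.single t 1) - ∑ x ∈ S, poissonTerm a p x))
      p := by
  have hE : HasDerivAt (fun p => Real.exp (-(∑ t, a t) * p))
      (Real.exp (-(∑ t, a t) * p) * (-(∑ t, a t))) p := by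
    simpa using ((hasDerivAt_id p).const_mul (-(∑ t, a t))).exp
  have hF := HasDerivAt.fun_sum fun x (_ : x ∈ S) => hasDerivAt_poissonTerm a x p
  have hswap : ∑ x ∈ S, ∑ t with x t ≠ 0, a t * poissonTerm a p (x - Pi.single t 1) =
      ∑ t, a t * ∑ x ∈ S with x t ≠ 0, poissonTerm a p (x - Pi.single t 1) := by
    rw [sum_comm' (t' := univ) (s' := fun t => {x ∈ S | x t ≠ 0})
      fun x t => by simp only [mem_filter, mem_univ, true_and, and_true]]
    simp_rw [mul_sum]
  refine (hE.mul hF).congr_deriv ?_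
  rw [hswap]
  simp only [mul_sub, sum_sub_distrib, ← sum_mul]
  ring

lemma strictAntiOn_poissonMass [Nonempty ι] {S : Finset (ι → ℕ)}
    (hS : IsLowerSet (S : Set (ι → ℕ))) (hSne : S.Nonempty) {a : ι → ℝ} (ha : ∀ t, 0 < a t) :
    StrictAntiOn (poissonMass S a) (Set.Ici 0) := by
  classical
  obtain ⟨y₀, hy₀⟩ := S.exists_maximal hSne
  have hy₀t (t : ι) : y₀ + Pi.single t 1 ∉ S := fun h => by
    simpa using hy₀.2 h le_self_add t
  refine strictAntiOn_of_deriv_neg (convex_Ici 0)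
    (fun p _ => (hasDerivAt_poissonMass S a p).continuousAt.continuousWithinAt) fun p hp => ?_
  rw [interior_Ici] at hp
  rw [(hasDerivAt_poissonMass S a p).deriv]
  refine mul_neg_of_pos_of_neg (Real.exp_pos _) (sum_neg (fun t _ => ?_) univ_nonempty)
  exact mul_neg_of_pos_of_neg (ha t) (sub_neg.2 <|
    hS.sum_filter_sub_single_lt (fun y _ => poissonTerm_pos ha hp y) hy₀.1 (hy₀t t))

end PoissonMass

theorem mixed_equilibrium_is_ESS_general (T : ℕ) (hT : 1 ≤ T)
    (lam : ℝ) (hlam : 0 < lam)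
    (r : Fin T → ℝ) (hr : ∀ t, 0 < r t) (hrsum : ∑ t, r t = 1)
    (τ : Fin T → ℝ) (hτ : ∀ t, 0 < τ t)
    (K C : ℝ) (hK : 0 < K)
    (S : Set (Fin T → ℕ))
    (hSdef : S = {x : Fin T → ℕ | ∑ t, (x t : ℝ) * τ t / (1 + τ t) < 1})
    (hSfin : S.Finite)
    (F : ℝ → ℝ)
    (hF : ∀ p : ℝ, F p =
      ∑ x ∈ hSfin.toFinset, ∏ t, (lam * r t * p) ^ (x t) / (Nat.factorial (x t) : ℝ))
    (G : ℝ → ℝ)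
    (hG : ∀ p : ℝ, G p = (1 - C / K) * Real.exp (lam * p))
    (UOFF : ℝ → ℝ)
    (hUOFF : ∀ p : ℝ, UOFF p = K * (1 - Real.exp (-(lam * p)) * F p))
    (U : ℝ → ℝ → ℝ)
    (hU : ∀ q σ : ℝ, U q σ = q * UOFF σ + (1 - q) * C)
    (pstar : ℝ) (hpstar : pstar ∈ Set.Ioo (0 : ℝ) 1) (hpeq : F pstar = G pstar) :
    ∀ q ∈ Set.Icc (0 : ℝ) 1, q ≠ pstar → ∀ ε ∈ Set.Ioo (0 : ℝ) 1,
      U pstar (ε * q + (1 - ε) * pstar) < U q (ε * q + (1 - ε) * pstar) := by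
  intro q hq hqp ε hε
  have : Nonempty (Fin T) := ⟨⟨0, hT⟩⟩
  have hS : IsLowerSet (hSfin.toFinset : Set (Fin T → ℕ)) := by
    rw [Set.Finite.coe_toFinset, hSdef]
    refine isLowerSet_setOf_sum_lt (f := fun t (k : ℕ) => (k : ℝ) * τ t / (1 + τ t))
      (fun t k l hkl => ?_) 1
    have := hτ t
    dsimp only
    gcongr
  have hSne : hSfin.toFinset.Nonempty := ⟨0, by simp [hSdef]⟩
  have hUOFF_eq (p : ℝ) : UOFF p = K * (1 - poissonMass hSfin.toFinset (lam * r ·) p) := by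
    rw [hUOFF, hF, poissonMass, ← mul_sum, hrsum, mul_one, neg_mul]
    rfl
  have hmono : StrictMonoOn UOFF (Set.Icc 0 1) := fun x hx y hy hxy => by
    rw [hUOFF_eq, hUOFF_eq]
    have := strictAntiOn_poissonMass hS hSne (fun t => mul_pos hlam (hr t)) hx.1 hy.1 hxy
    exact mul_lt_mul_of_pos_left (by linarith) hK
  have hpC : UOFF pstar = C := by
    rw [hUOFF, hpeq, hG, mul_left_comm, ← Real.exp_add, neg_add_cancel, Real.exp_zero, mul_one]
    field_simp
    ring
  rw [hU, hU]
  exact mixed_cost_lt_of_strictMonoOn hmono (Set.Ioo_subset_Icc_self hpstar) hpC hq hqp hε.1 hε.2.le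

/-- Under the existence/uniqueness condition `0 < C < K` and
`F(1) < (1 − C/K) * exp λ`, the unique interior solution `p* ∈ (0,1)` of
`F(p) = G(p)` is an evolutionarily stable strategy with invasion barrier 1:
for every mutant strategy `q ∈ [0,1]`, `q ≠ p*`, and every `ε ∈ (0,1)`, with
`p_ε := ε q + (1 − ε) p*` one has `U(p*, p_ε) < U(q, p_ε)`, where
`U(q,σ) = q * U_OFF(σ) + (1 − q) * C`. -/
theorem mixed_equilibrium_is_ESS (T : ℕ) (hT : 1 ≤ T)
    (lam : ℝ) (hlam : 0 < lam)
    (r : Fin T → ℝ) (hr : ∀ t, 0 < r t) (hrsum : ∑ t, r t = 1)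
    (τ : Fin T → ℝ) (hτ : ∀ t, 0 < τ t)
    (K C : ℝ) (hK : 0 < K) (hC : 0 < C) (hCK : C < K)
    (S : Set (Fin T → ℕ))
    (hSdef : S = {x : Fin T → ℕ | ∑ t, (x t : ℝ) * τ t / (1 + τ t) < 1})
    (hSfin : S.Finite)
    (F : ℝ → ℝ)
    (hF : ∀ p : ℝ, F p =
      ∑ x ∈ hSfin.toFinset, ∏ t, (lam * r t * p) ^ (x t) / (Nat.factorial (x t) : ℝ))
    (G : ℝ → ℝ)
    (hG : ∀ p : ℝ, G p = (1 - C / K) * Real.exp (lam * p))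
    (hcond : F 1 < (1 - C / K) * Real.exp lam)
    (UOFF : ℝ → ℝ)
    (hUOFF : ∀ p : ℝ, UOFF p = K * (1 - Real.exp (-(lam * p)) * F p))
    (U : ℝ → ℝ → ℝ)
    (hU : ∀ q σ : ℝ, U q σ = q * UOFF σ + (1 - q) * C)
    (pstar : ℝ) (hpstar : pstar ∈ Set.Ioo (0 : ℝ) 1) (hpeq : F pstar = G pstar) :
    ∀ q ∈ Set.Icc (0 : ℝ) 1, q ≠ pstar → ∀ ε ∈ Set.Ioo (0 : ℝ) 1,
      U pstar (ε * q + (1 - ε) * pstar) < U q (ε * q + (1 - ε) * pstar) :=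
  mixed_equilibrium_is_ESS_general T hT lam hlam r hr hrsum τ hτ K C hK S hSdef hSfin F hF G hG UOFF
    hUOFF U hU pstar hpstar hpeq
end

section
/- Let λ > 0 and 0 < C < K, and set a := 1 − C/K ∈ (0,1). Then: (i) the equation 1 + λ p = a * exp(λ p) has at most one solution p ∈ [0, ∞); and (ii) if w ∈ ℝ satisfies w ≤ −1 and w * exp(w) = −a * exp(−1), then p := −(1 + w)/λ satisfies p ≥ 0 and 1 + λ p = a * exp(λ p). -/
/-! Both parts come from the substitution `x = λ p`. The equation `1 + x = a eˣ` says
`(1 + x) e⁻ˣ = a`, and `x ↦ (1 + x) e⁻ˣ` is strictly decreasing on `[0, ∞)` because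
`e^(y - x) > 1 + (y - x)`; this gives uniqueness. For `x = -(1 + w)` the equation becomes
`-w = a e⁻¹ e⁻ʷ`, which is the Lambert relation `w eʷ = -a e⁻¹`, and `w ≤ -1` makes `x ≥ 0`. -/

open Real Set

theorem strictAntiOn_one_add_mul_exp_neg :
    StrictAntiOn (fun x : ℝ => (1 + x) * exp (-x)) (Ici 0) := by
  intro x hx y _ hxy
  have hexp : y - x + 1 < exp (y - x) := add_one_lt_exp (sub_ne_zero.2 hxy.ne')
  have hshift : exp (-x) = exp (y - x) * exp (-y) := by rw [← exp_add]; ring_nf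
  have hlt : 1 + y < (1 + x) * exp (y - x) := by
    nlinarith [mem_Ici.1 hx]
  show (1 + y) * exp (-y) < (1 + x) * exp (-x)
  rw [hshift, ← mul_assoc]
  exact mul_lt_mul_of_pos_right hlt (exp_pos _)

theorem eq_of_one_add_eq_mul_exp {a x y : ℝ} (hx : 0 ≤ x) (hy : 0 ≤ y)
    (hax : 1 + x = a * exp x) (hay : 1 + y = a * exp y) : x = y := by
  have hsolve : ∀ z, 1 + z = a * exp z → (1 + z) * exp (-z) = a := fun z hz => by
    rw [hz, mul_assoc, ← exp_add, add_neg_cancel, exp_zero, mul_one]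
  exact strictAntiOn_one_add_mul_exp_neg.injOn hx hy ((hsolve x hax).trans (hsolve y hay).symm)

theorem one_add_neg_one_add_eq_mul_exp_of_mul_exp_eq {a w : ℝ}
    (h : w * exp w = -a * exp (-1)) : 1 + -(1 + w) = a * exp (-(1 + w)) := by
  have hsplit : exp (-(1 + w)) * exp w = exp (-1) := by rw [← exp_add]; ring_nf
  apply mul_right_cancel₀ (exp_pos w).ne'
  rw [mul_assoc, hsplit]
  linarith

theorem single_type_lambertW_equilibrium_general
    (lam : ℝ) (hlam : 0 < lam)
    (a : ℝ) :
    (∀ p q : ℝ, 0 ≤ p → 0 ≤ q →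
      1 + lam * p = a * Real.exp (lam * p) →
      1 + lam * q = a * Real.exp (lam * q) → p = q) ∧
    (∀ w : ℝ, w ≤ -1 → w * Real.exp w = -a * Real.exp (-1) →
      0 ≤ -(1 + w) / lam ∧
      1 + lam * (-(1 + w) / lam) = a * Real.exp (lam * (-(1 + w) / lam))) := by
  refine ⟨fun p q hp hq hap haq => ?_, fun w hw hwa => ?_⟩
  · exact mul_left_cancel₀ hlam.ne'
      (eq_of_one_add_eq_mul_exp (by positivity) (by positivity) hap haq)
  · have hcancel : lam * (-(1 + w) / lam) = -(1 + w) := mul_div_cancel₀ _ hlam.ne'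
    rw [hcancel]
    exact ⟨div_nonneg (by linarith) hlam.le, one_add_neg_one_add_eq_mul_exp_of_mul_exp_eq hwa⟩

/-- single type, `1/2 < τ ≤ 1`: For `λ > 0`, `0 < C < K` and
`a := 1 − C/K ∈ (0,1)`: (i) the equilibrium equation `1 + λ p = a * exp (λ p)`
has at most one solution `p ∈ [0,∞)`; and (ii) if `w ≤ −1` satisfies the
Lambert-W relation `w * exp w = −a * exp (−1)`, then `p := −(1 + w)/λ` is a
nonnegative solution: `p ≥ 0` and `1 + λ p = a * exp (λ p)`. -/
theorem single_type_lambertW_equilibrium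
    (lam C K : ℝ) (hlam : 0 < lam) (hC : 0 < C) (hCK : C < K)
    (a : ℝ) (ha : a = 1 - C / K) :
    (∀ p q : ℝ, 0 ≤ p → 0 ≤ q →
      1 + lam * p = a * Real.exp (lam * p) →
      1 + lam * q = a * Real.exp (lam * q) → p = q) ∧
    (∀ w : ℝ, w ≤ -1 → w * Real.exp w = -a * Real.exp (-1) →
      0 ≤ -(1 + w) / lam ∧
      1 + lam * (-(1 + w) / lam) = a * Real.exp (lam * (-(1 + w) / lam))) :=
  single_type_lambertW_equilibrium_general lam hlam a
end

section
/- Let T ≥ 1, λ > 0, r : Fin T → ℝ with r t ≥ 0 for all t and ∑_t r t = 1, and let S' ⊆ (Fin T → ℕ) be a finite, nonempty, downward-closed set (if y ≤ x pointwise and x ∈ S' then y ∈ S'). For n ∈ ℕ set a_n := ∑_{x ∈ S', ∑_t x t = n} ∏_t (r t)^(x t) / (x t)!. Then (n + 1) * a_{n+1} ≤ a_n for every n ∈ ℕ. -/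
/-- Let `T ≥ 1`, `λ > 0`, `r` a probability vector on `Fin T`, and
`S'` a finite, nonempty, downward-closed set of count profiles. With
`a n := ∑_{x ∈ S', ∑ t, x t = n} ∏ t, (r t)^(x t) / (x t)!`, one has
`(n + 1) * a (n+1) ≤ a n` for every `n`. -/
theorem poisson_coefficient_inequality (T : ℕ) (hT : 1 ≤ T)
    (lam : ℝ) (hlam : 0 < lam)
    (r : Fin T → ℝ) (hr : ∀ t, 0 ≤ r t) (hrsum : ∑ t, r t = 1)
    (S' : Finset (Fin T → ℕ)) (hne : S'.Nonempty)
    (hdc : ∀ x ∈ S', ∀ y : Fin T → ℕ, (∀ t, y t ≤ x t) → y ∈ S')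
    (a : ℕ → ℝ)
    (ha : ∀ n : ℕ, a n =
      ∑ x ∈ S'.filter (fun x => ∑ t, x t = n),
        ∏ t, (r t) ^ (x t) / (Nat.factorial (x t) : ℝ)) :
    ∀ n : ℕ, ((n : ℝ) + 1) * a (n + 1) ≤ a n := by
  intro n
  classical
  set w : (Fin T → ℕ) → ℝ :=
    fun x => ∏ t, (r t) ^ (x t) / (Nat.factorial (x t) : ℝ) with hw
  have hw0 : ∀ x, 0 ≤ w x := fun x =>
    Finset.prod_nonneg fun t _ => div_nonneg (pow_nonneg (hr t) _) (Nat.cast_nonneg _)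
  -- pointwise identity
  have hpt : ∀ (x : Fin T → ℕ) (t : Fin T), 1 ≤ x t →
      (x t : ℝ) * w x = r t * w (Function.update x t (x t - 1)) := by
    intro x t hxt
    obtain ⟨k, hk⟩ : ∃ k, x t = k + 1 := ⟨x t - 1, (Nat.succ_pred_eq_of_pos hxt).symm⟩
    have h1 : w x = (r t ^ (x t) / (Nat.factorial (x t) : ℝ)) *
        ∏ s ∈ Finset.univ.erase t, (r s) ^ (x s) / (Nat.factorial (x s) : ℝ) :=
      (Finset.mul_prod_erase Finset.univ _ (Finset.mem_univ t)).symm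
    have h2 : w (Function.update x t (x t - 1)) =
        (r t ^ (x t - 1) / (Nat.factorial (x t - 1) : ℝ)) *
        ∏ s ∈ Finset.univ.erase t, (r s) ^ (x s) / (Nat.factorial (x s) : ℝ) := by
      show (∏ s, (r s) ^ (Function.update x t (x t - 1) s) /
          (Nat.factorial (Function.update x t (x t - 1) s) : ℝ)) = _
      rw [← Finset.mul_prod_erase Finset.univ _ (Finset.mem_univ t)]
      simp only [Function.update_self]
      congr 1
      refine Finset.prod_congr rfl fun s hs => ?_
      rw [Function.update_of_ne (Finset.ne_of_mem_erase hs)]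
    rw [h1, h2, hk]
    simp only [Nat.add_sub_cancel]
    rw [← mul_assoc, ← mul_assoc]
    congr 1
    have hk0 : (Nat.factorial k : ℝ) ≠ 0 := Nat.cast_ne_zero.mpr (Nat.factorial_ne_zero k)
    rw [Nat.factorial_succ]
    push_cast
    field_simp
    ring
  rw [ha n, ha (n + 1)]
  have key : ((n : ℝ) + 1) * ∑ x ∈ S'.filter (fun x => ∑ t, x t = n + 1), w x
      = ∑ p ∈ ((S'.filter (fun x => ∑ t, x t = n + 1)) ×ˢ
            (Finset.univ : Finset (Fin T))).filter (fun p => 1 ≤ p.1 p.2),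
          r p.2 * w (Function.update p.1 p.2 (p.1 p.2 - 1)) := by
    rw [Finset.mul_sum]
    conv_rhs => rw [Finset.sum_filter, Finset.sum_product]
    refine Finset.sum_congr rfl fun x hx => ?_
    have hsx : ∑ t, x t = n + 1 := (Finset.mem_filter.mp hx).2
    have hcast : ((n : ℝ) + 1) = ∑ t, (x t : ℝ) := by
      rw [← Nat.cast_sum, hsx]; push_cast; ring
    rw [hcast, Finset.sum_mul]
    refine Finset.sum_congr rfl fun t _ => ?_
    show (x t : ℝ) * w x = if 1 ≤ x t then r t * w (Function.update x t (x t - 1)) else 0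
    by_cases h : 1 ≤ x t
    · rw [if_pos h, hpt x t h]
    · rw [if_neg h]
      have hx0 : x t = 0 := by omega
      rw [hx0]; simp
  rw [key]
  -- reindex
  have reindex : ∑ p ∈ ((S'.filter (fun x => ∑ t, x t = n + 1)) ×ˢ
            (Finset.univ : Finset (Fin T))).filter (fun p => 1 ≤ p.1 p.2),
          r p.2 * w (Function.update p.1 p.2 (p.1 p.2 - 1))
      = ∑ p ∈ ((S'.filter (fun x => ∑ t, x t = n)) ×ˢ
            (Finset.univ : Finset (Fin T))).filter
            (fun p => Function.update p.1 p.2 (p.1 p.2 + 1) ∈ S'),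
          r p.2 * w p.1 := by
    refine Finset.sum_nbij' (fun p => (Function.update p.1 p.2 (p.1 p.2 - 1), p.2))
      (fun p => (Function.update p.1 p.2 (p.1 p.2 + 1), p.2)) ?_ ?_ ?_ ?_ ?_
    · rintro ⟨x, t⟩ hp
      simp only [Finset.mem_filter, Finset.mem_product, Finset.mem_univ, and_true] at hp ⊢
      obtain ⟨⟨hxS, hxs⟩, hxt⟩ := hp
      have hmem : Function.update x t (x t - 1) ∈ S' := by
        refine hdc x hxS _ fun s => ?_
        by_cases hst : s = t
        · subst hst; simp
        · rw [Function.update_of_ne hst]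
      refine ⟨⟨hmem, ?_⟩, ?_⟩
      · have := Finset.sum_update_of_mem (Finset.mem_univ t) x (x t - 1)
        rw [this]
        have h2 := Finset.sum_update_of_mem (Finset.mem_univ t) x (x t)
        rw [Function.update_eq_self] at h2
        omega
      · have : Function.update x t (x t - 1) t = x t - 1 := Function.update_self _ _ _
        rw [this, Function.update_idem]
        have : x t - 1 + 1 = x t := by omega
        rw [this, Function.update_eq_self]
        exact hxS
    · rintro ⟨y, t⟩ hp
      simp only [Finset.mem_filter, Finset.mem_product, Finset.mem_univ, and_true] at hp ⊢
      obtain ⟨⟨hyS, hys⟩, hmem⟩ := hp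
      refine ⟨⟨hmem, ?_⟩, ?_⟩
      · have := Finset.sum_update_of_mem (Finset.mem_univ t) y (y t + 1)
        rw [this]
        have h2 := Finset.sum_update_of_mem (Finset.mem_univ t) y (y t)
        rw [Function.update_eq_self] at h2
        omega
      · rw [Function.update_self]; omega
    · rintro ⟨x, t⟩ hp
      simp only [Finset.mem_filter, Finset.mem_product, Finset.mem_univ, and_true] at hp
      obtain ⟨⟨-, -⟩, hxt⟩ := hp
      simp only [Prod.mk.injEq, and_true]
      rw [Function.update_self, Function.update_idem]
      have : x t - 1 + 1 = x t := by omega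
      rw [this, Function.update_eq_self]
    · rintro ⟨y, t⟩ hp
      simp only [Prod.mk.injEq, and_true]
      rw [Function.update_self, Function.update_idem]
      have : y t + 1 - 1 = y t := by omega
      rw [this, Function.update_eq_self]
    · rintro ⟨x, t⟩ hp
      simp only [Finset.mem_filter, Finset.mem_product, Finset.mem_univ, and_true] at hp
      rfl
  rw [reindex]
  calc ∑ p ∈ ((S'.filter (fun x => ∑ t, x t = n)) ×ˢ
            (Finset.univ : Finset (Fin T))).filter
            (fun p => Function.update p.1 p.2 (p.1 p.2 + 1) ∈ S'),
          r p.2 * w p.1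
      ≤ ∑ p ∈ (S'.filter (fun x => ∑ t, x t = n)) ×ˢ
            (Finset.univ : Finset (Fin T)), r p.2 * w p.1 := by
        refine Finset.sum_le_sum_of_subset_of_nonneg (Finset.filter_subset _ _) ?_
        intro p _ _
        exact mul_nonneg (hr p.2) (hw0 p.1)
    _ = ∑ x ∈ S'.filter (fun x => ∑ t, x t = n), w x := by
        rw [Finset.sum_product]
        refine Finset.sum_congr rfl fun x _ => ?_
        show (∑ t, r t * w x) = w x
        rw [← Finset.sum_mul, hrsum, one_mul]
    _ = ∑ x ∈ S'.filter (fun x => ∑ t, x t = n),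
          ∏ t, (r t) ^ (x t) / (Nat.factorial (x t) : ℝ) := rfl
end
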